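/- arXiv:2302.07063 — 2 statements merged into one kernel-verified Lean document; each statement's English description precedes it below -/
import Mathlib

section
/- Let S be a decision rule system with n(S)>0, C ∈ {EAR, AR, EAD, AD, ESR, SR}, and α a consistent equation system over attributes of A(S) whose values lie in EV_S(a_{i_j}) for the extended problems and in V_S(a_{i_j}) for the ordinary problems. Then h_C(S) ≥ h_C(S_α). -/
open scoped Classical
noncomputable section

/-- Attributes are natural numbers. -/
abbrev Attr := ℕ
/-- A value in an equation system: `some δ` is a number, `none` is the special symbol `*`. -/
abbrev Val := Option ℕ
/-- A decision rule: left-hand side (set of equations attribute = numeric value) and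
right-hand side (decision). -/
abbrev Rule := Finset (Attr × ℕ) × ℕ
/-- An equation system over attributes with possibly `*` values. -/
abbrev EqSys := Finset (Attr × Val)
/-- A decision rule system. -/
abbrev DRS := Finset Rule

/-- The equation system `K(r)` of a rule. -/
def Kr (r : Rule) : EqSys := r.1.image fun p => (p.1, some p.2)
/-- The set `A(r)` of attributes of a rule. -/
def Ar (r : Rule) : Finset Attr := r.1.image Prod.fst
/-- The length of a rule. -/
def ruleLen (r : Rule) : ℕ := r.1.card
/-- Well-formed rule: attributes in the left-hand side are pairwise different. -/
def WFRule (r : Rule) : Prop := ∀ p ∈ r.1, ∀ q ∈ r.1, p.1 = q.1 → p.2 = q.2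
/-- Well-formed decision rule system: a finite nonempty set of well-formed rules. -/
def WFS (S : DRS) : Prop := S.Nonempty ∧ ∀ r ∈ S, WFRule r

/-- `A(S)`: attributes of a system. -/
def AS (S : DRS) : Finset Attr := S.biUnion Ar
/-- `n(S) = |A(S)|`. -/
def nS (S : DRS) : ℕ := (AS S).card
/-- `d(S)`: the maximum length of a rule in `S`. -/
def dS (S : DRS) : ℕ := S.sup ruleLen
/-- `V_S(a)`: values of attribute `a` occurring in `S`. -/
def VS (S : DRS) (a : Attr) : Finset ℕ :=
  S.biUnion fun r => (r.1.filter fun p => p.1 = a).image Prod.snd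
/-- `k(S)`: maximum number of values of a single attribute. -/
def kS (S : DRS) : ℕ := (AS S).sup fun a => (VS S a).card

/-- Branching sets of o-decision trees: `V_S(a)`. -/
def Bo (S : DRS) (a : Attr) : Finset Val := (VS S a).image some
/-- Branching sets of e-decision trees: `EV_S(a) = V_S(a) ∪ {*}`. -/
def Be (S : DRS) (a : Attr) : Finset Val := insert none (Bo S a)

/-- Consistency of an equation system. -/
def Consistent (K : EqSys) : Prop := ∀ p ∈ K, ∀ q ∈ K, p.1 = q.1 → p.2 = q.2

/-- Decision trees: terminal nodes labeled with sets of rules, working nodes labeled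
with an attribute and having a child for each possible value (only children whose
labels lie in the relevant branching set are meaningful). -/
inductive DTree where
  | leaf : DRS → DTree
  | node : Attr → (Val → DTree) → DTree

/-- Depth of a decision tree with respect to branching sets `B`. -/
def depthT (B : Attr → Finset Val) : DTree → ℕ
  | .leaf _ => 0
  | .node a c => ((B a).sup fun v => depthT B (c v)) + 1

/-- A decision tree over a system `S` (with branching sets `B`). -/
def TreeOver (B : Attr → Finset Val) (S : DRS) : DTree → Prop
  | .leaf Z => Z ⊆ S
  | .node a c => a ∈ AS S ∧ ∀ v ∈ B a, TreeOver B S (c v)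

/-- `PathT B Γ K Z`: there is a complete path in `Γ` (following edges with labels
in the branching sets `B`) with equation system `K` and terminal label `Z`. -/
inductive PathT (B : Attr → Finset Val) : DTree → EqSys → DRS → Prop
  | leaf (Z : DRS) : PathT B (.leaf Z) ∅ Z
  | node (a : Attr) (c : Val → DTree) (v : Val) (K : EqSys) (Z : DRS) :
      v ∈ B a → PathT B (c v) K Z → PathT B (.node a c) (insert (a, v) K) Z

/-- `Γ` solves the problem given by correctness condition `cond` on (K(ξ), τ(ξ)). -/
def Solves (cond : EqSys → DRS → Prop) (B : Attr → Finset Val) (Γ : DTree) : Prop :=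
  ∀ K Z, PathT B Γ K Z → Consistent K → cond K Z

/-- Correctness condition for the All Rules problem. -/
def CondAR (S : DRS) (K : EqSys) (Z : DRS) : Prop :=
  (∀ r ∈ Z, Kr r ⊆ K) ∧ ∀ r ∈ S, r ∉ Z → ¬ Consistent (Kr r ∪ K)
/-- Correctness condition for the All Decisions problem. -/
def CondAD (S : DRS) (K : EqSys) (Z : DRS) : Prop :=
  (∀ r ∈ Z, Kr r ⊆ K) ∧ ∀ r ∈ S, r.2 ∉ Z.image Prod.snd → ¬ Consistent (Kr r ∪ K)
/-- Correctness condition for the Some Rules problem. -/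
def CondSR (S : DRS) (K : EqSys) (Z : DRS) : Prop :=
  (∀ r ∈ Z, Kr r ⊆ K) ∧ (Z = ∅ → ∀ r ∈ S, ¬ Consistent (Kr r ∪ K))

/-- Minimum depth of a decision tree over `S` solving the given problem. -/
def hgen (cond : DRS → EqSys → DRS → Prop) (B : DRS → Attr → Finset Val) (S : DRS) : ℕ :=
  sInf {m | ∃ Γ, TreeOver (B S) S Γ ∧ Solves (cond S) (B S) Γ ∧ depthT (B S) Γ = m}

def hAR (S : DRS) : ℕ := hgen CondAR Bo S
def hEAR (S : DRS) : ℕ := hgen CondAR Be S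
def hAD (S : DRS) : ℕ := hgen CondAD Bo S
def hEAD (S : DRS) : ℕ := hgen CondAD Be S
def hSR (S : DRS) : ℕ := hgen CondSR Bo S
def hESR (S : DRS) : ℕ := hgen CondSR Be S

/-- SR-reduced system. -/
def SRred (S : DRS) : Prop := ∀ r ∈ S, ¬ ∃ r' ∈ S, r'.1 ⊂ r.1
/-- AD-reduced system. -/
def ADred (S : DRS) : Prop := ∀ r ∈ S, ¬ ∃ r' ∈ S, r'.1 ⊂ r.1 ∧ r'.2 = r.2
/-- `R_SR(S)`. -/
def RSR (S : DRS) : DRS := S.filter fun r => ¬ ∃ r' ∈ S, r'.1 ⊂ r.1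
/-- `R_AD(S)`. -/
def RAD (S : DRS) : DRS := S.filter fun r => ¬ ∃ r' ∈ S, r'.1 ⊂ r.1 ∧ r'.2 = r.2

/-- `h_C(n,d,k)`: minimum of `h S` over systems with the given parameters. -/
def hmin (h : DRS → ℕ) (n d k : ℕ) : ℕ :=
  sInf {m | ∃ S, WFS S ∧ nS S = n ∧ dS S = d ∧ kS S = k ∧ h S = m}
/-- `H_C(n,d,k)`: maximum of `h S` over systems with the given parameters. -/
def Hmax (h : DRS → ℕ) (n d k : ℕ) : ℕ :=
  sSup {m | ∃ S, WFS S ∧ nS S = n ∧ dS S = d ∧ kS S = k ∧ h S = m}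
/-- `h_C^R(n,d,k)`: minimum of `h S` over reduced systems (`P`) with given parameters. -/
def hminR (h : DRS → ℕ) (P : DRS → Prop) (n d k : ℕ) : ℕ :=
  sInf {m | ∃ S, WFS S ∧ P S ∧ nS S = n ∧ dS S = d ∧ kS S = k ∧ h S = m}
/-- `H_C^R(n,d,k)`: maximum of `h S` over reduced systems (`P`) with given parameters. -/
def HmaxR (h : DRS → ℕ) (P : DRS → Prop) (n d k : ℕ) : ℕ :=
  sSup {m | ∃ S, WFS S ∧ P S ∧ nS S = n ∧ dS S = d ∧ kS S = k ∧ h S = m}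

/-- Node cover of the hypergraph `G(S)`. -/
def NodeCover (S : DRS) (B : Finset Attr) : Prop :=
  B ⊆ AS S ∧ ∀ r ∈ S, Ar r ≠ ∅ → (Ar r ∩ B).Nonempty
/-- `β(S)`: minimum cardinality of a node cover of `G(S)`. -/
def nodeCoverNum (S : DRS) : ℕ := sInf {m | ∃ B, NodeCover S B ∧ B.card = m}

/-- `I_SR(S)`. -/
def ISR (S : DRS) : DRS := if ∀ r ∈ S, r.1 ≠ ∅ then S else S.filter fun r => r.1 = ∅
/-- `D_0(S)`: right-hand sides of length-0 rules. -/
def D0 (S : DRS) : Finset ℕ := (S.filter fun r => r.1 = ∅).image Prod.snd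
/-- `I_AD(S)`. -/
def IAD (S : DRS) : DRS := S.filter fun r => r.1 = ∅ ∨ r.2 ∉ D0 S

/-- `K(S, δ̄)` for an assignment `f` of numeric values to all attributes of `S`. -/
def KStuple (S : DRS) (f : Attr → ℕ) : EqSys := (AS S).image fun a => (a, some (f a))
/-- An incomplete decision rule system. -/
def IncompleteS (S : DRS) : Prop :=
  ∃ f : Attr → ℕ, (∀ a ∈ AS S, f a ∈ VS S a) ∧ ∀ r ∈ S, ¬ Consistent (Kr r ∪ KStuple S f)

/-- `r_α`: remove from the left-hand side of `r` all equations belonging to `α`. -/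
def resRule (α : EqSys) (r : Rule) : Rule :=
  (r.1.filter fun p => (p.1, (some p.2 : Val)) ∉ α, r.2)
/-- `S_α`: rules `r_α` for the rules `r ∈ S` with `K(r) ∪ α` consistent. -/
def Sres (α : EqSys) (S : DRS) : DRS :=
  (S.filter fun r => Consistent (Kr r ∪ α)).image (resRule α)

/-- Value chosen at a node labeled by an attribute `a ∉ A(S_α)` when building `Γ_α`:
the `α`-value of `a` if `a` occurs in `α`, and the minimum number of `V_S(a)` otherwise. -/
def chooseVal (α : EqSys) (S : DRS) (a : Attr) : Val :=
  if h : ∃ v, (a, v) ∈ α then Classical.choose h else some (sInf {n : ℕ | n ∈ VS S a})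

/-- The decision tree `Γ_α`. -/
def resTree (α : EqSys) (S : DRS) : DTree → DTree
  | .leaf Z => .leaf (Sres α Z)
  | .node a c =>
      if a ∈ AS (Sres α S) then .node a fun v => resTree α S (c v)
      else resTree α S (c (chooseVal α S a))

/-- The o-decision tree `o(Γ)`: remove all nodes reachable only via an edge labeled `*`. -/
def oTree : DTree → DTree
  | .leaf Z => .leaf Z
  | .node a c => .node a fun v => match v with
      | none => .leaf ∅
      | some x => oTree (c (some x))

/-! A decision tree `Γ` over `S` is turned into the tree `Γ_α = resTree α S Γ` over `S_α`: a node
whose attribute lies outside `A(S_α)` is skipped by following the edge labeled with `chooseVal`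
(the `α`-value of the attribute, or some value from `V_S`), and each terminal label `Z` becomes
`Z_α`. This does not increase the depth. A complete path of `Γ_α` with equation system `K'` lifts
to a path of `Γ` whose system `K` agrees with `K'` on `A(S_α)` and with `chooseVal` elsewhere.
Since no attribute of `α` survives in `A(S_α)`, the system `K ∪ α` is then consistent, and the
correctness condition of each problem for `(K, Z)` in `S` turns into the one for `(K', Z_α)`
in `S_α`. As `h_C` is an infimum, some tree solving the problem for `S` must also be
exhibited; the tree that queries every attribute of `A(S)` is one. -/

theorem Consistent.mono {T U : EqSys} (hU : Consistent U) (h : T ⊆ U) : Consistent T :=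
  fun p hp q hq => hU p (h hp) q (h hq)

theorem Consistent.of_forall_mem_or_eq {T W : EqSys} (hW : Consistent W) (f : Attr → Val)
    (P : Attr → Prop) (hWP : ∀ p ∈ W, P p.1)
    (hT : ∀ p ∈ T, p ∈ W ∨ (¬ P p.1 ∧ p.2 = f p.1)) : Consistent T := by
  intro p hp q hq hpq
  rcases hT p hp with hpW | ⟨hpP, hpf⟩ <;> rcases hT q hq with hqW | ⟨hqP, hqf⟩
  · exact hW p hpW q hqW hpq
  · exact absurd (hpq ▸ hWP p hpW) hqP
  · exact absurd (hpq ▸ hWP q hqW) hpP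
  · rw [hpf, hqf, hpq]

theorem mem_AS_iff {S : DRS} {a : Attr} : a ∈ AS S ↔ ∃ r ∈ S, ∃ p ∈ r.1, p.1 = a := by
  simp [AS, Ar]

theorem Ar_subset_AS {S : DRS} {r : Rule} (hr : r ∈ S) : Ar r ⊆ AS S :=
  Finset.subset_biUnion_of_mem _ hr

theorem mem_Kr_iff {r : Rule} {p : Attr × Val} :
    p ∈ Kr r ↔ ∃ q ∈ r.1, ((q.1, some q.2) : Attr × Val) = p := by
  simp [Kr]

theorem fst_mem_Ar_of_mem_Kr {r : Rule} {p : Attr × Val} (hp : p ∈ Kr r) : p.1 ∈ Ar r := by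
  obtain ⟨q, hq, rfl⟩ := mem_Kr_iff.1 hp
  exact Finset.mem_image_of_mem _ hq

theorem mem_VS_iff {S : DRS} {a : Attr} {m : ℕ} : m ∈ VS S a ↔ ∃ r ∈ S, (a, m) ∈ r.1 := by
  simp only [VS, Finset.mem_biUnion, Finset.mem_image, Finset.mem_filter]
  constructor
  · rintro ⟨r, hr, ⟨x, y⟩, ⟨hp, rfl⟩, rfl⟩
    exact ⟨r, hr, hp⟩
  · rintro ⟨r, hr, h⟩
    exact ⟨r, hr, (a, m), ⟨h, rfl⟩, rfl⟩

theorem VS_nonempty {S : DRS} {a : Attr} (h : a ∈ AS S) : (VS S a).Nonempty := by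
  obtain ⟨r, hr, p, hp, rfl⟩ := mem_AS_iff.1 h
  exact ⟨p.2, mem_VS_iff.2 ⟨r, hr, hp⟩⟩

section Restriction

variable {α : EqSys}

theorem mem_Sres_iff {Z : DRS} {r' : Rule} :
    r' ∈ Sres α Z ↔ ∃ r, (r ∈ Z ∧ Consistent (Kr r ∪ α)) ∧ resRule α r = r' := by
  simp [Sres]

theorem resRule_mem_Sres {Z : DRS} {r : Rule} (hr : r ∈ Z) (hc : Consistent (Kr r ∪ α)) :
    resRule α r ∈ Sres α Z :=
  Finset.mem_image_of_mem _ (Finset.mem_filter.2 ⟨hr, hc⟩)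

theorem Sres_mono {Z S : DRS} (h : Z ⊆ S) : Sres α Z ⊆ Sres α S :=
  Finset.image_subset_image (Finset.filter_subset_filter _ h)

theorem mem_Kr_resRule {r : Rule} {p : Attr × Val} :
    p ∈ Kr (resRule α r) ↔ p ∈ Kr r ∧ p ∉ α := by
  simp only [Kr, resRule, Finset.mem_image, Finset.mem_filter]
  constructor
  · rintro ⟨q, ⟨hq, hqα⟩, rfl⟩
    exact ⟨⟨q, hq, rfl⟩, hqα⟩
  · rintro ⟨⟨q, hq, rfl⟩, hα⟩
    exact ⟨q, ⟨hq, hα⟩, rfl⟩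

theorem VS_Sres_subset (S : DRS) (a : Attr) : VS (Sres α S) a ⊆ VS S a := by
  intro m hm
  obtain ⟨r', hr', hmem⟩ := mem_VS_iff.1 hm
  obtain ⟨r, ⟨hrS, -⟩, rfl⟩ := mem_Sres_iff.1 hr'
  exact mem_VS_iff.2 ⟨r, hrS, (Finset.mem_filter.1 hmem).1⟩

theorem Bo_Sres_subset (S : DRS) (a : Attr) : Bo (Sres α S) a ⊆ Bo S a :=
  Finset.image_subset_image (VS_Sres_subset S a)

theorem Be_Sres_subset (S : DRS) (a : Attr) : Be (Sres α S) a ⊆ Be S a :=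
  Finset.insert_subset_insert _ (Bo_Sres_subset S a)

/-- An equation of `α` either contradicts a rule or is removed from it, so its attribute never
occurs in `S_α`. -/
theorem fst_notMem_AS_Sres {S : DRS} {p : Attr × Val} (hp : p ∈ α) : p.1 ∉ AS (Sres α S) := by
  intro ha
  obtain ⟨r', hr', q, hq, hqa⟩ := mem_AS_iff.1 ha
  obtain ⟨r, ⟨-, hcr⟩, rfl⟩ := mem_Sres_iff.1 hr'
  obtain ⟨hqr, hqα⟩ := Finset.mem_filter.1 hq
  have hval : (some q.2 : Val) = p.2 :=
    hcr _ (Finset.mem_union_left _ (Finset.mem_image_of_mem _ hqr)) _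
      (Finset.mem_union_right _ hp) hqa
  exact hqα (by rw [show q.1 = p.1 from hqa, hval]; exact hp)

theorem chooseVal_eq_of_mem (S : DRS) (hα : Consistent α) {p : Attr × Val} (hp : p ∈ α) :
    chooseVal α S p.1 = p.2 := by
  have hex : ∃ v, (p.1, v) ∈ α := ⟨p.2, hp⟩
  rw [chooseVal, dif_pos hex]
  exact hα _ hex.choose_spec _ hp rfl

theorem chooseVal_mem {S : DRS} {B : Attr → Finset Val} (hBo : ∀ a, Bo S a ⊆ B a)
    (hval : ∀ p ∈ α, p.2 ∈ B p.1) {a : Attr} (ha : a ∈ AS S) : chooseVal α S a ∈ B a := by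
  rw [chooseVal]
  split_ifs with h
  · exact hval (a, h.choose) h.choose_spec
  · exact hBo a (Finset.mem_image_of_mem _ (Nat.sInf_mem (VS_nonempty ha)))

/-- Relates the equation system `K` of a path of `Γ` to the system `K'` of the corresponding path
of `Γ_α`. -/
def IsRestriction (α : EqSys) (S : DRS) (K K' : EqSys) : Prop :=
  (∀ p ∈ K, p ∈ K' ∨ (p.1 ∉ AS (Sres α S) ∧ p.2 = chooseVal α S p.1)) ∧
    ∀ p ∈ K', p.1 ∈ AS (Sres α S)

namespace IsRestriction

variable {S : DRS} {K K' : EqSys}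

theorem consistent_union_alpha (hα : Consistent α) (h : IsRestriction α S K K')
    (hK' : Consistent K') : Consistent (K ∪ α) := by
  refine hK'.of_forall_mem_or_eq (chooseVal α S) (· ∈ AS (Sres α S)) h.2 fun p hp => ?_
  rcases Finset.mem_union.1 hp with hpK | hpα
  · exact h.1 p hpK
  · exact Or.inr ⟨fst_notMem_AS_Sres hpα, (chooseVal_eq_of_mem S hα hpα).symm⟩

theorem consistent_Kr_union (hα : Consistent α) (h : IsRestriction α S K K') {r : Rule}
    (hr : r ∈ S) (hrα : Consistent (Kr r ∪ α)) (hr' : Consistent (Kr (resRule α r) ∪ K')) :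
    Consistent (Kr r ∪ K) := by
  have hrS : Ar (resRule α r) ⊆ AS (Sres α S) := Ar_subset_AS (resRule_mem_Sres hr hrα)
  refine hr'.of_forall_mem_or_eq (chooseVal α S) (· ∈ AS (Sres α S)) ?_ fun p hp => ?_
  · intro p hp
    rcases Finset.mem_union.1 hp with hp | hp
    · exact hrS (fst_mem_Ar_of_mem_Kr hp)
    · exact h.2 p hp
  · rcases Finset.mem_union.1 hp with hp | hp
    · by_cases hpα : p ∈ α
      · exact Or.inr ⟨fst_notMem_AS_Sres hpα, (chooseVal_eq_of_mem S hα hpα).symm⟩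
      · exact Or.inl (Finset.mem_union_left _ (mem_Kr_resRule.2 ⟨hp, hpα⟩))
    · exact (h.1 p hp).imp_left (Finset.mem_union_right _)

theorem Kr_subset {Z : DRS} (h : IsRestriction α S K K') (hZS : Z ⊆ S)
    (hZ : ∀ r ∈ Z, Kr r ⊆ K) : ∀ r' ∈ Sres α Z, Kr r' ⊆ K' := by
  intro r' hr' p hp
  obtain ⟨r, ⟨hrZ, hrα⟩, rfl⟩ := mem_Sres_iff.1 hr'
  refine (h.1 p (hZ r hrZ (mem_Kr_resRule.1 hp).1)).resolve_right fun hpS => hpS.1 ?_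
  exact Ar_subset_AS (resRule_mem_Sres (hZS hrZ) hrα) (fst_mem_Ar_of_mem_Kr hp)

end IsRestriction

theorem resRule_mem_Sres_of_Kr_subset {Z : DRS} {K : EqSys} (hKα : Consistent (K ∪ α))
    {r : Rule} (hr : r ∈ Z) (hrK : Kr r ⊆ K) : resRule α r ∈ Sres α Z :=
  resRule_mem_Sres hr (hKα.mono (Finset.union_subset_union hrK subset_rfl))

def CondRestricts (cond : DRS → EqSys → DRS → Prop) (α : EqSys) (S : DRS) : Prop :=
  ∀ K K' Z, Z ⊆ S → IsRestriction α S K K' → Consistent K' →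
    cond S K Z → cond (Sres α S) K' (Sres α Z)

variable {S : DRS}

theorem condAR_restricts (hα : Consistent α) : CondRestricts CondAR α S := by
  intro K K' Z hZS h _ hc
  refine ⟨h.Kr_subset hZS hc.1, fun r' hr' hr'Z hcons => ?_⟩
  obtain ⟨r, ⟨hr, hrα⟩, rfl⟩ := mem_Sres_iff.1 hr'
  exact hc.2 r hr (fun hrZ => hr'Z (resRule_mem_Sres hrZ hrα))
    (h.consistent_Kr_union hα hr hrα hcons)

theorem condAD_restricts (hα : Consistent α) : CondRestricts CondAD α S := by
  intro K K' Z hZS h hK' hc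
  refine ⟨h.Kr_subset hZS hc.1, fun r' hr' hr'Z hcons => ?_⟩
  obtain ⟨r, ⟨hr, hrα⟩, rfl⟩ := mem_Sres_iff.1 hr'
  have hrZ : r.2 ∉ Z.image Prod.snd := by
    rintro hd
    obtain ⟨s, hsZ, hs⟩ := Finset.mem_image.1 hd
    exact hr'Z (Finset.mem_image.2 ⟨resRule α s,
      resRule_mem_Sres_of_Kr_subset (h.consistent_union_alpha hα hK') hsZ (hc.1 s hsZ), hs⟩)
  exact hc.2 r hr hrZ (h.consistent_Kr_union hα hr hrα hcons)

theorem condSR_restricts (hα : Consistent α) : CondRestricts CondSR α S := by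
  intro K K' Z hZS h hK' hc
  refine ⟨h.Kr_subset hZS hc.1, fun hZ' r' hr' hcons => ?_⟩
  obtain ⟨r, ⟨hr, hrα⟩, rfl⟩ := mem_Sres_iff.1 hr'
  have hZ : Z = ∅ := Finset.eq_empty_of_forall_notMem fun s hsZ => by
    simpa [hZ'] using
      resRule_mem_Sres_of_Kr_subset (h.consistent_union_alpha hα hK') hsZ (hc.1 s hsZ)
  exact hc.2 hZ r hr (h.consistent_Kr_union hα hr hrα hcons)

end Restriction

section ResTree

variable {α : EqSys} {S : DRS} {B B' : Attr → Finset Val}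

theorem treeOver_resTree (hB : ∀ a, B' a ⊆ B a) (hch : ∀ a ∈ AS S, chooseVal α S a ∈ B a) :
    ∀ Γ : DTree, TreeOver B S Γ → TreeOver B' (Sres α S) (resTree α S Γ)
  | .leaf _, h => Sres_mono h
  | .node a c, ⟨ha, hc⟩ => by
    rw [resTree]
    split_ifs with hmem
    · exact ⟨hmem, fun v hv => treeOver_resTree hB hch (c v) (hc v (hB a hv))⟩
    · exact treeOver_resTree hB hch _ (hc _ (hch a ha))

theorem depthT_resTree_le (hB : ∀ a, B' a ⊆ B a) (hch : ∀ a ∈ AS S, chooseVal α S a ∈ B a) :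
    ∀ Γ : DTree, TreeOver B S Γ → depthT B' (resTree α S Γ) ≤ depthT B Γ
  | .leaf _, _ => le_rfl
  | .node a c, ⟨ha, hc⟩ => by
    have hchild : ∀ v ∈ B a, depthT B (c v) ≤ (B a).sup fun v => depthT B (c v) :=
      fun v hv => Finset.le_sup (f := fun v => depthT B (c v)) hv
    rw [resTree]
    split_ifs with hmem
    · exact Nat.succ_le_succ (Finset.sup_le fun v hv =>
        (depthT_resTree_le hB hch (c v) (hc v (hB a hv))).trans (hchild v (hB a hv)))
    · exact (depthT_resTree_le hB hch _ (hc _ (hch a ha))).trans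
        ((hchild _ (hch a ha)).trans (Nat.le_succ _))

theorem exists_pathT_of_pathT_resTree (hB : ∀ a, B' a ⊆ B a)
    (hch : ∀ a ∈ AS S, chooseVal α S a ∈ B a) :
    ∀ Γ : DTree, TreeOver B S Γ → ∀ K' Z', PathT B' (resTree α S Γ) K' Z' →
      ∃ K Z, PathT B Γ K Z ∧ Z' = Sres α Z ∧ Z ⊆ S ∧ IsRestriction α S K K'
  | .leaf Z, hZS, K', Z', hp => by
    rw [resTree] at hp
    cases hp
    exact ⟨∅, Z, .leaf Z, rfl, hZS, by simp, by simp⟩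
  | .node a c, ⟨ha, hc⟩, K', Z', hp => by
    rw [resTree] at hp
    split_ifs at hp with hmem
    · cases hp with
      | node _ _ v K₁ _ hv hp₁ =>
        obtain ⟨K, Z, hK, rfl, hZS, hres, hattr⟩ :=
          exists_pathT_of_pathT_resTree hB hch (c v) (hc v (hB a hv)) K₁ Z' hp₁
        refine ⟨insert (a, v) K, Z, .node a c v K Z (hB a hv) hK, rfl, hZS, ?_, ?_⟩
        · intro p hp
          rcases Finset.mem_insert.1 hp with rfl | hp
          · exact Or.inl (Finset.mem_insert_self _ _)
          · exact (hres p hp).imp_left (Finset.mem_insert_of_mem)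
        · intro p hp
          rcases Finset.mem_insert.1 hp with rfl | hp
          · exact hmem
          · exact hattr p hp
    · obtain ⟨K, Z, hK, rfl, hZS, hres, hattr⟩ :=
        exists_pathT_of_pathT_resTree hB hch _ (hc _ (hch a ha)) K' Z' hp
      refine ⟨insert (a, chooseVal α S a) K, Z, .node a c _ K Z (hch a ha) hK, rfl, hZS,
        fun p hp => ?_, hattr⟩
      rcases Finset.mem_insert.1 hp with rfl | hp
      · exact Or.inr ⟨hmem, rfl⟩
      · exact hres p hp

end ResTree

def queryAllTree (S : DRS) : List Attr → EqSys → DTree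
  | [], K => .leaf (S.filter fun r => Kr r ⊆ K)
  | a :: L, K => .node a fun v => queryAllTree S L (insert (a, v) K)

section QueryAllTree

variable {S : DRS} {B : Attr → Finset Val}

theorem treeOver_queryAllTree :
    ∀ L : List Attr, (∀ a ∈ L, a ∈ AS S) → ∀ K₀, TreeOver B S (queryAllTree S L K₀)
  | [], _, _ => Finset.filter_subset _ _
  | a :: L, h, _ => ⟨h a List.mem_cons_self, fun _ _ =>
      treeOver_queryAllTree L (fun b hb => h b (List.mem_cons_of_mem a hb)) _⟩

theorem pathT_queryAllTree :
    ∀ {L : List Attr} {K₀ K : EqSys} {Z : DRS}, PathT B (queryAllTree S L K₀) K Z →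
      Z = S.filter (fun r => Kr r ⊆ K ∪ K₀) ∧ ∀ a ∈ L, ∃ v, (a, v) ∈ K
  | [], _, _, _, hp => by
    cases hp
    simp
  | a :: _, _, _, _, hp => by
    cases hp with
    | node _ _ v _ _ _ hp₁ =>
      obtain ⟨rfl, hcov⟩ := pathT_queryAllTree hp₁
      refine ⟨by rw [Finset.union_insert, Finset.insert_union], fun b hb => ?_⟩
      rcases List.mem_cons.1 hb with rfl | hb
      · exact ⟨v, Finset.mem_insert_self _ _⟩
      · obtain ⟨w, hw⟩ := hcov b hb
        exact ⟨w, Finset.mem_insert_of_mem hw⟩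

theorem pathT_queryAllTree_AS {K : EqSys} {Z : DRS}
    (hp : PathT B (queryAllTree S (AS S).toList ∅) K Z) :
    Z = S.filter (fun r => Kr r ⊆ K) ∧ ∀ r ∈ S, ¬ Kr r ⊆ K → ¬ Consistent (Kr r ∪ K) := by
  obtain ⟨hZ, hcov⟩ := pathT_queryAllTree hp
  refine ⟨by rwa [Finset.union_empty] at hZ, fun r hr hrK hcons => hrK fun p hpr => ?_⟩
  obtain ⟨v, hv⟩ := hcov p.1 (Finset.mem_toList.2 (Ar_subset_AS hr (fst_mem_Ar_of_mem_Kr hpr)))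
  have hpv : p.2 = v :=
    hcons p (Finset.mem_union_left _ hpr) (p.1, v) (Finset.mem_union_right _ hv) rfl
  rwa [← hpv] at hv

theorem exists_solves_CondAR : ∃ Γ, TreeOver B S Γ ∧ Solves (CondAR S) B Γ := by
  refine ⟨_, treeOver_queryAllTree _ (fun a => Finset.mem_toList.1) ∅, fun K Z hp _ => ?_⟩
  obtain ⟨rfl, hbad⟩ := pathT_queryAllTree_AS hp
  exact ⟨fun r hr => (Finset.mem_filter.1 hr).2,
    fun r hr hrZ => hbad r hr fun hrK => hrZ (Finset.mem_filter.2 ⟨hr, hrK⟩)⟩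

theorem exists_solves_CondAD : ∃ Γ, TreeOver B S Γ ∧ Solves (CondAD S) B Γ := by
  refine ⟨_, treeOver_queryAllTree _ (fun a => Finset.mem_toList.1) ∅, fun K Z hp _ => ?_⟩
  obtain ⟨rfl, hbad⟩ := pathT_queryAllTree_AS hp
  exact ⟨fun r hr => (Finset.mem_filter.1 hr).2, fun r hr hrZ => hbad r hr fun hrK =>
    hrZ (Finset.mem_image_of_mem _ (Finset.mem_filter.2 ⟨hr, hrK⟩))⟩

theorem exists_solves_CondSR : ∃ Γ, TreeOver B S Γ ∧ Solves (CondSR S) B Γ := by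
  refine ⟨_, treeOver_queryAllTree _ (fun a => Finset.mem_toList.1) ∅, fun K Z hp _ => ?_⟩
  obtain ⟨rfl, hbad⟩ := pathT_queryAllTree_AS hp
  exact ⟨fun r hr => (Finset.mem_filter.1 hr).2, fun hZ r hr => hbad r hr fun hrK =>
    Finset.notMem_empty r (hZ ▸ Finset.mem_filter.2 ⟨hr, hrK⟩)⟩

end QueryAllTree

theorem hgen_le_hgen_of_forall {cond : DRS → EqSys → DRS → Prop} {B : DRS → Attr → Finset Val}
    {S T : DRS} (hS : ∃ Γ, TreeOver (B S) S Γ ∧ Solves (cond S) (B S) Γ)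
    (hmap : ∀ Γ, TreeOver (B S) S Γ → Solves (cond S) (B S) Γ →
      ∃ Γ', TreeOver (B T) T Γ' ∧ Solves (cond T) (B T) Γ' ∧
        depthT (B T) Γ' ≤ depthT (B S) Γ) :
    hgen cond B T ≤ hgen cond B S := by
  obtain ⟨Γ₀, hΓ₀, hsol₀⟩ := hS
  have hne : {m | ∃ Γ, TreeOver (B S) S Γ ∧ Solves (cond S) (B S) Γ ∧
      depthT (B S) Γ = m}.Nonempty := ⟨_, Γ₀, hΓ₀, hsol₀, rfl⟩
  obtain ⟨Γ, hΓ, hsol, hd⟩ := Nat.sInf_mem hne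
  obtain ⟨Γ', hΓ', hsol', hd'⟩ := hmap Γ hΓ hsol
  calc hgen cond B T ≤ depthT (B T) Γ' := Nat.sInf_le ⟨Γ', hΓ', hsol', rfl⟩
    _ ≤ depthT (B S) Γ := hd'
    _ = hgen cond B S := hd

theorem hgen_Sres_le {cond : DRS → EqSys → DRS → Prop} {B : DRS → Attr → Finset Val}
    {α : EqSys} {S : DRS} (hα : Consistent α) (hB : ∀ a, B (Sres α S) a ⊆ B S a)
    (hch : ∀ a ∈ AS S, chooseVal α S a ∈ B S a)
    (hS : ∃ Γ, TreeOver (B S) S Γ ∧ Solves (cond S) (B S) Γ) (hcond : CondRestricts cond α S) :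
    hgen cond B (Sres α S) ≤ hgen cond B S := by
  refine hgen_le_hgen_of_forall hS fun Γ hΓ hsol => ⟨resTree α S Γ, treeOver_resTree hB hch Γ hΓ,
    fun K' Z' hp hK' => ?_, depthT_resTree_le hB hch Γ hΓ⟩
  obtain ⟨K, Z, hK, rfl, hZS, hres⟩ := exists_pathT_of_pathT_resTree hB hch Γ hΓ K' Z' hp
  have hKα := hres.consistent_union_alpha hα hK'
  exact hcond K K' Z hZS hres hK' (hsol K Z hK (hKα.mono Finset.subset_union_left))

theorem stmt5_general (S : DRS)
    (α : EqSys) (hcons : Consistent α) :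
    ((∀ p ∈ α, p.2 ∈ Be S p.1) →
      hEAR (Sres α S) ≤ hEAR S ∧ hEAD (Sres α S) ≤ hEAD S ∧ hESR (Sres α S) ≤ hESR S) ∧
    ((∀ p ∈ α, p.2 ∈ Bo S p.1) →
      hAR (Sres α S) ≤ hAR S ∧ hAD (Sres α S) ≤ hAD S ∧ hSR (Sres α S) ≤ hSR S) := by
  refine ⟨fun hval => ?_, fun hval => ?_⟩
  · have hch : ∀ a ∈ AS S, chooseVal α S a ∈ Be S a :=
      fun a => chooseVal_mem (fun a => Finset.subset_insert _ _) hval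
    exact ⟨hgen_Sres_le hcons (Be_Sres_subset S) hch exists_solves_CondAR (condAR_restricts hcons),
      hgen_Sres_le hcons (Be_Sres_subset S) hch exists_solves_CondAD (condAD_restricts hcons),
      hgen_Sres_le hcons (Be_Sres_subset S) hch exists_solves_CondSR (condSR_restricts hcons)⟩
  · have hch : ∀ a ∈ AS S, chooseVal α S a ∈ Bo S a :=
      fun a => chooseVal_mem (fun _ => subset_rfl) hval
    exact ⟨hgen_Sres_le hcons (Bo_Sres_subset S) hch exists_solves_CondAR (condAR_restricts hcons),
      hgen_Sres_le hcons (Bo_Sres_subset S) hch exists_solves_CondAD (condAD_restricts hcons),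
      hgen_Sres_le hcons (Bo_Sres_subset S) hch exists_solves_CondSR (condSR_restricts hcons)⟩

/-- `h_C(S) ≥ h_C(S_α)` for all six problems (values of `α` from
`EV_S` for the extended problems and from `V_S` for the ordinary ones). -/
theorem stmt5 (S : DRS) (hS : WFS S) (hn : 0 < nS S)
    (α : EqSys) (hcons : Consistent α) (hattr : ∀ p ∈ α, p.1 ∈ AS S) :
    ((∀ p ∈ α, p.2 ∈ Be S p.1) →
      hEAR (Sres α S) ≤ hEAR S ∧ hEAD (Sres α S) ≤ hEAD S ∧ hESR (Sres α S) ≤ hESR S) ∧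
    ((∀ p ∈ α, p.2 ∈ Bo S p.1) →
      hAR (Sres α S) ≤ hAR S ∧ hAD (Sres α S) ≤ hAD S ∧ hSR (Sres α S) ≤ hSR S) :=
  stmt5_general S α hcons
end
end

section
/- For any decision rule system S, h_ESR(S) = h_ESR(R_SR(S)) and h_EAD(S) = h_EAD(R_AD(S)). -/
open scoped Classical
noncomputable section

/-! ### Auxiliary lemmas for Statement 8 -/

lemma VS_mono {T S : DRS} (h : T ⊆ S) (a : Attr) : VS T a ⊆ VS S a :=
  Finset.biUnion_subset_biUnion_of_subset_left _ h

lemma AS_mono {T S : DRS} (h : T ⊆ S) : AS T ⊆ AS S :=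
  Finset.biUnion_subset_biUnion_of_subset_left _ h

lemma Be_mono {T S : DRS} (h : T ⊆ S) (a : Attr) : Be T a ⊆ Be S a :=
  Finset.insert_subset_insert _ (Finset.image_subset_image (VS_mono h a))

lemma none_mem_Be (S : DRS) (a : Attr) : (none : Val) ∈ Be S a :=
  Finset.mem_insert_self _ _

lemma mem_VS_of_mem {S : DRS} {r : Rule} (hr : r ∈ S) {b : Attr} {y : ℕ}
    (h : (b, y) ∈ r.1) : y ∈ VS S b := by
  unfold VS
  rw [Finset.mem_biUnion]
  exact ⟨r, hr, Finset.mem_image.2 ⟨(b, y), Finset.mem_filter.2 ⟨h, rfl⟩, rfl⟩⟩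

lemma Kr_mono {r r' : Rule} (h : r'.1 ⊆ r.1) : Kr r' ⊆ Kr r :=
  Finset.image_subset_image h

lemma mem_Kr {r : Rule} {p : Attr × Val} (hp : p ∈ Kr r) :
    ∃ y : ℕ, p.2 = some y ∧ (p.1, y) ∈ r.1 := by
  unfold Kr at hp
  obtain ⟨q, hq, hqe⟩ := Finset.mem_image.1 hp
  exact ⟨q.2, by rw [← hqe], by rw [← hqe]; exact hq⟩

lemma Kr_attr_mem_AS {S : DRS} {r : Rule} (hr : r ∈ S) {p : Attr × Val}
    (hp : p ∈ Kr r) : p.1 ∈ AS S := by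
  obtain ⟨y, _, hmem⟩ := mem_Kr hp
  unfold AS
  rw [Finset.mem_biUnion]
  exact ⟨r, hr, Finset.mem_image.2 ⟨(p.1, y), hmem, rfl⟩⟩

lemma Kr_val_mem_Be {S : DRS} {r : Rule} (hr : r ∈ S) {p : Attr × Val}
    (hp : p ∈ Kr r) : ∃ y : ℕ, p.2 = some y ∧ p.2 ∈ Be S p.1 := by
  obtain ⟨y, hy, hmem⟩ := mem_Kr hp
  refine ⟨y, hy, ?_⟩
  rw [hy]
  exact Finset.mem_insert_of_mem (Finset.mem_image.2 ⟨y, mem_VS_of_mem hr hmem, rfl⟩)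

lemma consistent_mono {K₁ K₂ : EqSys} (h : K₁ ⊆ K₂) (hc : Consistent K₂) :
    Consistent K₁ := fun p hp q hq => hc p (h hp) q (h hq)

/-- Minimal SR rule below a given rule. -/
lemma exists_min_SR (S : DRS) : ∀ n (r : Rule), r ∈ S → r.1.card ≤ n →
    ∃ r' ∈ RSR S, r'.1 ⊆ r.1 := by
  intro n
  induction n with
  | zero =>
    intro r hr hc
    refine ⟨r, Finset.mem_filter.2 ⟨hr, ?_⟩, subset_rfl⟩
    rintro ⟨r'', _, h2⟩
    have := Finset.card_lt_card h2
    omega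
  | succ n ih =>
    intro r hr hc
    by_cases h : ∃ r'' ∈ S, r''.1 ⊂ r.1
    · obtain ⟨r'', h1, h2⟩ := h
      have hlt := Finset.card_lt_card h2
      obtain ⟨r', hr', hsub⟩ := ih r'' h1 (by omega)
      exact ⟨r', hr', hsub.trans h2.subset⟩
    · exact ⟨r, Finset.mem_filter.2 ⟨hr, h⟩, subset_rfl⟩

/-- Minimal AD rule below a given rule. -/
lemma exists_min_AD (S : DRS) : ∀ n (r : Rule), r ∈ S → r.1.card ≤ n →
    ∃ r' ∈ RAD S, r'.1 ⊆ r.1 ∧ r'.2 = r.2 := by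
  intro n
  induction n with
  | zero =>
    intro r hr hc
    refine ⟨r, Finset.mem_filter.2 ⟨hr, ?_⟩, subset_rfl, rfl⟩
    rintro ⟨r'', _, h2, _⟩
    have := Finset.card_lt_card h2
    omega
  | succ n ih =>
    intro r hr hc
    by_cases h : ∃ r'' ∈ S, r''.1 ⊂ r.1 ∧ r''.2 = r.2
    · obtain ⟨r'', h1, h2, h3⟩ := h
      have hlt := Finset.card_lt_card h2
      obtain ⟨r', hr', hsub, hdec⟩ := ih r'' h1 (by omega)
      exact ⟨r', hr', hsub.trans h2.subset, hdec.trans h3⟩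
    · exact ⟨r, Finset.mem_filter.2 ⟨hr, h⟩, subset_rfl, rfl⟩

lemma RSR_subset (S : DRS) : RSR S ⊆ S := Finset.filter_subset _ _
lemma RAD_subset (S : DRS) : RAD S ⊆ S := Finset.filter_subset _ _

/-- Leaf labels of complete paths are subsets of the system. -/
lemma path_leaf_subset {B : Attr → Finset Val} {S : DRS} :
    ∀ {Γ K Z}, TreeOver B S Γ → PathT B Γ K Z → Z ⊆ S := by
  intro Γ K Z hT hP
  induction hP with
  | leaf Z => exact hT
  | node a c v K Z hv _ ih => exact ih (hT.2 v hv)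

/-! ### Transformation 1: from a tree over `S` to a tree over `T ⊆ S` -/

def tr1 (T : DRS) (f : DRS → DRS) : DTree → DTree
  | .leaf Z => .leaf (f Z)
  | .node a c =>
      if a ∈ AS T then .node a (fun v => tr1 T f (c v)) else tr1 T f (c none)

lemma depth_tr1 {T S : DRS} (hsub : T ⊆ S) (f : DRS → DRS) :
    ∀ Γ, depthT (Be T) (tr1 T f Γ) ≤ depthT (Be S) Γ := by
  intro Γ
  induction Γ with
  | leaf Z => simp [tr1, depthT]
  | node a c ih =>
    by_cases h : a ∈ AS T
    · simp only [tr1, h, if_true, depthT]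
      have : ((Be T a).sup fun v => depthT (Be T) (tr1 T f (c v))) ≤
          (Be S a).sup fun v => depthT (Be S) (c v) := by
        apply Finset.sup_le
        intro v hv
        exact le_trans (ih v)
          (Finset.le_sup (f := fun v => depthT (Be S) (c v)) (Be_mono hsub a hv))
      omega
    · simp only [tr1, h, if_false, depthT]
      exact le_trans (ih none)
        (le_trans (Finset.le_sup (f := fun v => depthT (Be S) (c v))
          (none_mem_Be S a)) (Nat.le_add_right _ 1))

lemma treeOver_tr1 {T S : DRS} (hsub : T ⊆ S) (f : DRS → DRS)
    (hf : ∀ Z, f Z ⊆ T) :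
    ∀ Γ, TreeOver (Be S) S Γ → TreeOver (Be T) T (tr1 T f Γ) := by
  intro Γ
  induction Γ with
  | leaf Z => intro _; exact hf Z
  | node a c ih =>
    intro hT
    by_cases h : a ∈ AS T
    · simp only [tr1, h, if_true]
      exact ⟨h, fun v hv => ih v (hT.2 v (Be_mono hsub a hv))⟩
    · simp only [tr1, h, if_false]
      exact ih none (hT.2 none (none_mem_Be S a))

lemma path_tr1 {T S : DRS} (hsub : T ⊆ S) (f : DRS → DRS) :
    ∀ Γ K' Z', PathT (Be T) (tr1 T f Γ) K' Z' →
    ∃ K Z, PathT (Be S) Γ K Z ∧ Z' = f Z ∧ K' ⊆ K ∧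
      (∀ p ∈ K, p ∈ K' ∨ (p.2 = none ∧ p.1 ∉ AS T)) ∧
      (∀ p ∈ K', p.1 ∈ AS T) := by
  intro Γ
  induction Γ with
  | leaf Z =>
    intro K' Z' hP
    cases hP
    exact ⟨∅, Z, .leaf Z, rfl, subset_rfl, by simp, by simp⟩
  | node a c ih =>
    intro K' Z' hP
    by_cases h : a ∈ AS T
    · simp only [tr1, h, if_true] at hP
      cases hP with
      | node _ _ v K₀' Z' hv hP₀ =>
        obtain ⟨K₀, Z, hPK, hZ, hsub', hex, hattr⟩ := ih v _ _ hP₀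
        refine ⟨insert (a, v) K₀, Z, .node a c v K₀ Z (Be_mono hsub a hv) hPK, hZ,
          Finset.insert_subset_insert _ hsub', ?_, ?_⟩
        · intro p hp
          rcases Finset.mem_insert.1 hp with hp | hp
          · exact Or.inl (hp ▸ Finset.mem_insert_self _ _)
          · rcases hex p hp with h1 | h1
            · exact Or.inl (Finset.mem_insert_of_mem h1)
            · exact Or.inr h1
        · intro p hp
          rcases Finset.mem_insert.1 hp with hp | hp
          · rw [hp]; exact h
          · exact hattr p hp
    · simp only [tr1, h, if_false] at hP
      obtain ⟨K₀, Z, hPK, hZ, hsub', hex, hattr⟩ := ih none _ _ hP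
      refine ⟨insert (a, none) K₀, Z,
        .node a c none K₀ Z (none_mem_Be S a) hPK, hZ,
        hsub'.trans (Finset.subset_insert _ _), ?_, hattr⟩
      intro p hp
      rcases Finset.mem_insert.1 hp with hp | hp
      · exact Or.inr ⟨by rw [hp], by rw [hp]; exact h⟩
      · exact hex p hp

/-- Consistency transfer for transformation 1. -/
lemma cons_ext {T : DRS} {W K K' : EqSys}
    (hW : ∀ p ∈ W, p.1 ∈ AS T) (hK' : ∀ p ∈ K', p.1 ∈ AS T)
    (hsub : K' ⊆ K) (hex : ∀ p ∈ K, p ∈ K' ∨ (p.2 = none ∧ p.1 ∉ AS T))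
    (h : Consistent (W ∪ K')) : Consistent (W ∪ K) := by
  intro p hp q hq heq
  have hp' : p ∈ W ∪ K' ∨ (p.2 = none ∧ p.1 ∉ AS T) := by
    rcases Finset.mem_union.1 hp with hp | hp
    · exact Or.inl (Finset.mem_union_left _ hp)
    · rcases hex p hp with h1 | h1
      · exact Or.inl (Finset.mem_union_right _ h1)
      · exact Or.inr h1
  have hq' : q ∈ W ∪ K' ∨ (q.2 = none ∧ q.1 ∉ AS T) := by
    rcases Finset.mem_union.1 hq with hq | hq
    · exact Or.inl (Finset.mem_union_left _ hq)
    · rcases hex q hq with h1 | h1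
      · exact Or.inl (Finset.mem_union_right _ h1)
      · exact Or.inr h1
  have attrmem : ∀ p, p ∈ W ∪ K' → p.1 ∈ AS T := by
    intro p hp
    rcases Finset.mem_union.1 hp with hp | hp
    · exact hW p hp
    · exact hK' p hp
  rcases hp' with hp' | hp' <;> rcases hq' with hq' | hq'
  · exact h p hp' q hq' heq
  · exact absurd (heq ▸ attrmem p hp') hq'.2
  · exact absurd (heq ▸ attrmem q hq') (heq ▸ hp'.2)
  · rw [hp'.1, hq'.1]

/-! ### Transformation 2: from a tree over `T ⊆ S` to a tree over `S` -/

def phi (T : DRS) (a : Attr) (v : Val) : Val := if v ∈ Be T a then v else none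

def psi (T : DRS) (p : Attr × Val) : Attr × Val := (p.1, phi T p.1 p.2)

lemma phi_mem (T : DRS) (a : Attr) (v : Val) : phi T a v ∈ Be T a := by
  unfold phi
  split
  · assumption
  · exact none_mem_Be T a

lemma phi_of_mem {T : DRS} {a : Attr} {v : Val} (h : v ∈ Be T a) :
    phi T a v = v := if_pos h

lemma phi_eq_some {T : DRS} {a : Attr} {v : Val} {y : ℕ}
    (h : phi T a v = some y) : v = some y := by
  unfold phi at h
  split at h
  · exact h
  · exact absurd h (by simp)

def tr2 (T : DRS) : DTree → DTree
  | .leaf Z => .leaf Z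
  | .node a c => .node a (fun v => tr2 T (c (phi T a v)))

lemma depth_tr2 {T S : DRS} :
    ∀ Γ, depthT (Be S) (tr2 T Γ) ≤ depthT (Be T) Γ := by
  intro Γ
  induction Γ with
  | leaf Z => simp [tr2, depthT]
  | node a c ih =>
    simp only [tr2, depthT]
    have : ((Be S a).sup fun v => depthT (Be S) (tr2 T (c (phi T a v)))) ≤
        (Be T a).sup fun v => depthT (Be T) (c v) := by
      apply Finset.sup_le
      intro v _
      exact le_trans (ih (phi T a v))
        (Finset.le_sup (f := fun v => depthT (Be T) (c v)) (phi_mem T a v))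
    omega

lemma treeOver_tr2 {T S : DRS} (hsub : T ⊆ S) :
    ∀ Γ, TreeOver (Be T) T Γ → TreeOver (Be S) S (tr2 T Γ) := by
  intro Γ
  induction Γ with
  | leaf Z => intro h; exact h.trans hsub
  | node a c ih =>
    intro hT
    exact ⟨AS_mono hsub hT.1, fun v _ => ih (phi T a v) (hT.2 _ (phi_mem T a v))⟩

lemma path_tr2 {T : DRS} (B : Attr → Finset Val) :
    ∀ Γ K Z, PathT B (tr2 T Γ) K Z → PathT (Be T) Γ (K.image (psi T)) Z := by
  intro Γ
  induction Γ with
  | leaf Z =>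
    intro K Z hP
    cases hP
    simpa using PathT.leaf (B := Be T) Z
  | node a c ih =>
    intro K Z hP
    cases hP with
    | node _ _ v K₀ Z hv hP₀ =>
      have := PathT.node (B := Be T) a c (phi T a v) (K₀.image (psi T)) Z
        (phi_mem T a v) (ih (phi T a v) _ _ hP₀)
      rwa [Finset.image_insert] at *
      
lemma image_psi_consistent {T : DRS} {K : EqSys} (h : Consistent K) :
    Consistent (K.image (psi T)) := by
  intro p hp q hq heq
  obtain ⟨p₀, hp₀, hpe⟩ := Finset.mem_image.1 hp
  obtain ⟨q₀, hq₀, hqe⟩ := Finset.mem_image.1 hq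
  have h1 : p₀.1 = q₀.1 := by
    have e1 : p.1 = p₀.1 := by rw [← hpe]; rfl
    have e2 : q.1 = q₀.1 := by rw [← hqe]; rfl
    rw [← e1, ← e2]; exact heq
  have h2 : p₀.2 = q₀.2 := h p₀ hp₀ q₀ hq₀ h1
  rw [← hpe, ← hqe]
  simp [psi, h1, h2]

lemma psi_fix_Kr {T : DRS} {r : Rule} (hr : r ∈ T) {p : Attr × Val}
    (hp : p ∈ Kr r) : psi T p = p := by
  obtain ⟨y, hy, hmem⟩ := Kr_val_mem_Be hr hp
  unfold psi
  rw [phi_of_mem hmem]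

lemma image_psi_Kr_union {T : DRS} {r : Rule} (hr : r ∈ T) (K : EqSys) :
    (Kr r ∪ K).image (psi T) = Kr r ∪ K.image (psi T) := by
  rw [Finset.image_union]
  congr 1
  calc (Kr r).image (psi T) = (Kr r).image id :=
        Finset.image_congr (fun p hp => psi_fix_Kr hr hp)
    _ = Kr r := Finset.image_id

lemma Kr_subset_of_image {T : DRS} {r : Rule} (hr : r ∈ T) {K : EqSys}
    (h : Kr r ⊆ K.image (psi T)) : Kr r ⊆ K := by
  intro p hp
  obtain ⟨y, hy, hmem⟩ := Kr_val_mem_Be hr hp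
  obtain ⟨q₀, hq₀, hqe⟩ := Finset.mem_image.1 (h hp)
  have h1 : q₀.1 = p.1 := by rw [← hqe]; rfl
  have h2 : phi T q₀.1 q₀.2 = p.2 := by rw [← hqe]; rfl
  have h3 : q₀.2 = p.2 := by
    rw [hy] at h2 ⊢
    exact phi_eq_some h2
  have : q₀ = p := Prod.ext h1 h3
  exact this ▸ hq₀

/-! ### The master equality lemma -/

lemma hgen_eq_restrict (cond : DRS → EqSys → DRS → Prop) (S T : DRS)
    (hsub : T ⊆ S) (f : DRS → DRS) (hf : ∀ Z, f Z ⊆ T)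
    (hcond2 : ∀ K Z, Consistent K → Z ⊆ T →
      cond T (K.image (psi T)) Z → cond S K Z)
    (hcond1 : ∀ K K' Z, Consistent K' → K' ⊆ K →
      (∀ p ∈ K, p ∈ K' ∨ (p.2 = none ∧ p.1 ∉ AS T)) →
      (∀ p ∈ K', p.1 ∈ AS T) → Z ⊆ S → cond S K Z → cond T K' (f Z)) :
    hgen cond Be S = hgen cond Be T := by
  unfold hgen
  set A : Set ℕ := {m | ∃ Γ, TreeOver (Be S) S Γ ∧ Solves (cond S) (Be S) Γ ∧
    depthT (Be S) Γ = m} with hA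
  set B : Set ℕ := {m | ∃ Γ, TreeOver (Be T) T Γ ∧ Solves (cond T) (Be T) Γ ∧
    depthT (Be T) Γ = m} with hB
  have h1 : ∀ b ∈ B, ∃ a ∈ A, a ≤ b := by
    rintro b ⟨Γ', hTo, hSo, hd⟩
    refine ⟨depthT (Be S) (tr2 T Γ'), ⟨tr2 T Γ', treeOver_tr2 hsub Γ' hTo, ?_, rfl⟩,
      hd ▸ depth_tr2 Γ'⟩
    intro K Z hP hK
    have hP' := path_tr2 (Be S) Γ' K Z hP
    have hZ : Z ⊆ T := path_leaf_subset hTo hP'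
    exact hcond2 K Z hK hZ (hSo _ Z hP' (image_psi_consistent hK))
  have h2 : ∀ a ∈ A, ∃ b ∈ B, b ≤ a := by
    rintro a ⟨Γ, hTo, hSo, hd⟩
    refine ⟨depthT (Be T) (tr1 T f Γ),
      ⟨tr1 T f Γ, treeOver_tr1 hsub f hf Γ hTo, ?_, rfl⟩, hd ▸ depth_tr1 hsub f Γ⟩
    intro K' Z' hP' hK'
    obtain ⟨K, Z, hP, hZ', hKsub, hex, hattr⟩ := path_tr1 hsub f Γ K' Z' hP'
    have hK : Consistent K := by
      have := cons_ext (T := T) (W := ∅) (K := K) (K' := K') (by simp) hattr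
        hKsub hex (by rwa [Finset.empty_union])
      rwa [Finset.empty_union] at this
    have hZS : Z ⊆ S := path_leaf_subset hTo hP
    rw [hZ']
    exact hcond1 K K' Z hK' hKsub hex hattr hZS (hSo K Z hP hK)
  rcases Set.eq_empty_or_nonempty B with hBe | hBn
  · rcases Set.eq_empty_or_nonempty A with hAe | hAn
    · rw [hAe, hBe]
    · obtain ⟨a, ha⟩ := hAn
      obtain ⟨b, hb, _⟩ := h2 a ha
      rw [hBe] at hb
      exact absurd hb (Set.notMem_empty b)
  · have hAn : A.Nonempty := by
      obtain ⟨b, hb⟩ := hBn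
      obtain ⟨a, ha, _⟩ := h1 b hb
      exact ⟨a, ha⟩
    apply le_antisymm
    · obtain ⟨a, ha, hle⟩ := h1 _ (Nat.sInf_mem hBn)
      exact le_trans (Nat.sInf_le ha) hle
    · obtain ⟨b, hb, hle⟩ := h2 _ (Nat.sInf_mem hAn)
      exact le_trans (Nat.sInf_le hb) hle

/-- `h_ESR(S) = h_ESR(R_SR(S))` and `h_EAD(S) = h_EAD(R_AD(S))`. -/
theorem stmt8 (S : DRS) (hS : WFS S) :
    hESR S = hESR (RSR S) ∧ hEAD S = hEAD (RAD S) := by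
  constructor
  · -- ESR part
    refine hgen_eq_restrict CondSR S (RSR S) (RSR_subset S)
      (fun Z => (RSR S).filter (fun r' => ∃ r ∈ Z, r'.1 ⊆ r.1))
      (fun Z => Finset.filter_subset _ _) ?_ ?_
    · -- hcond2
      intro K Z hK hZT h
      constructor
      · intro r hr
        exact Kr_subset_of_image (hZT hr) (h.1 r hr)
      · intro hZ r hr hcons
        obtain ⟨r', hr', hsub'⟩ := exists_min_SR S r.1.card r hr le_rfl
        have hc1 : Consistent (Kr r' ∪ K) :=
          consistent_mono (Finset.union_subset_union_left (Kr_mono hsub')) hcons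
        have hc2 : Consistent (Kr r' ∪ K.image (psi (RSR S))) := by
          rw [← image_psi_Kr_union hr']
          exact image_psi_consistent hc1
        exact h.2 hZ r' hr' hc2
    · -- hcond1
      intro K K' Z hK' hKsub hex hattr hZS h
      constructor
      · intro r' hr'
        have hfil := Finset.mem_filter.1 hr'
        obtain ⟨r, hrZ, hsub'⟩ := hfil.2
        intro p hp
        have hpK : p ∈ K := h.1 r hrZ (Kr_mono hsub' hp)
        rcases hex p hpK with h1 | h1
        · exact h1
        · obtain ⟨y, hy, _⟩ := mem_Kr hp
          rw [hy] at h1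
          exact absurd h1.1 (by simp)
      · intro hfZ r' hr' hcons
        have hZ : Z = ∅ := by
          by_contra hne
          obtain ⟨r, hrZ⟩ := Finset.nonempty_iff_ne_empty.2 hne
          obtain ⟨r'', hr'', hsub''⟩ :=
            exists_min_SR S r.1.card r (hZS hrZ) le_rfl
          have hmm : r'' ∈ (RSR S).filter (fun r' => ∃ r ∈ Z, r'.1 ⊆ r.1) :=
            Finset.mem_filter.2 ⟨hr'', r, hrZ, hsub''⟩
          have hfZ' : (RSR S).filter (fun r' => ∃ r ∈ Z, r'.1 ⊆ r.1) = ∅ := hfZ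
          rw [hfZ'] at hmm
          exact absurd hmm (Finset.notMem_empty _)
        have hcK : Consistent (Kr r' ∪ K) :=
          cons_ext (fun p hp => Kr_attr_mem_AS hr' hp) hattr hKsub hex hcons
        exact h.2 hZ r' (RSR_subset S hr') hcK
  · -- EAD part
    refine hgen_eq_restrict CondAD S (RAD S) (RAD_subset S)
      (fun Z => (RAD S).filter (fun r' => ∃ r ∈ Z, r'.1 ⊆ r.1 ∧ r'.2 = r.2))
      (fun Z => Finset.filter_subset _ _) ?_ ?_
    · -- hcond2
      intro K Z hK hZT h
      constructor
      · intro r hr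
        exact Kr_subset_of_image (hZT hr) (h.1 r hr)
      · intro r hr hdec hcons
        obtain ⟨r', hr', hsub', hd⟩ := exists_min_AD S r.1.card r hr le_rfl
        have hc1 : Consistent (Kr r' ∪ K) :=
          consistent_mono (Finset.union_subset_union_left (Kr_mono hsub')) hcons
        have hc2 : Consistent (Kr r' ∪ K.image (psi (RAD S))) := by
          rw [← image_psi_Kr_union hr']
          exact image_psi_consistent hc1
        exact h.2 r' hr' (hd ▸ hdec) hc2
    · -- hcond1
      intro K K' Z hK' hKsub hex hattr hZS h
      constructor
      · intro r' hr'
        have hfil := Finset.mem_filter.1 hr'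
        obtain ⟨r, hrZ, hsub', _⟩ := hfil.2
        intro p hp
        have hpK : p ∈ K := h.1 r hrZ (Kr_mono hsub' hp)
        rcases hex p hpK with h1 | h1
        · exact h1
        · obtain ⟨y, hy, _⟩ := mem_Kr hp
          rw [hy] at h1
          exact absurd h1.1 (by simp)
      · intro r' hr' hdec hcons
        have hcK : Consistent (Kr r' ∪ K) :=
          cons_ext (fun p hp => Kr_attr_mem_AS hr' hp) hattr hKsub hex hcons
        by_cases hmem : r'.2 ∈ Z.image Prod.snd
        · obtain ⟨r, hrZ, hre⟩ := Finset.mem_image.1 hmem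
          obtain ⟨r'', hr'', hsub'', hd''⟩ :=
            exists_min_AD S r.1.card r (hZS hrZ) le_rfl
          have hmemf : r'' ∈ (RAD S).filter
              (fun r' => ∃ r ∈ Z, r'.1 ⊆ r.1 ∧ r'.2 = r.2) :=
            Finset.mem_filter.2 ⟨hr'', r, hrZ, hsub'', hd''⟩
          exact hdec (Finset.mem_image.2 ⟨r'', hmemf, hd''.trans hre⟩)
        · exact h.2 r' (RAD_subset S hr') hmem hcK
end
end
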